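/- Let φ : Δ^{0̂} → Δ be a group epimorphism. The following are equivalent: (a) R₁, R₂, R₁^{R₀}, R₂^{R₀} ∉ Δ⁺ φ⁻¹; (b) Δ⁺ φ⁻¹ = Δ⁺ ∩ Δ^{0̂}; (c) ker φ ⊆ Δ⁺; (d) for every subgroup O ≤ Δ with O ⊆ Δ⁺, also O φ⁻¹ ⊆ Δ⁺. -/
import Mathlib


/-- The relations making each generator an involution. -/
def rels : Set (FreeGroup (Fin 3)) := {x | ∃ i, x = (FreeGroup.of i) ^ 2}

/-- Δ = C₂ * C₂ * C₂. -/
abbrev Δ := PresentedGroup rels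

/-- The generators R₀, R₁, R₂ of Δ. -/
def R (i : Fin 3) : Δ := PresentedGroup.of i

/-- Δ^{0̂}, the normal closure of {R₁, R₂}, an index-2 subgroup of Δ. -/
def Δ0 : Subgroup Δ := Subgroup.normalClosure {R 1, R 2}

/-- Δ⁺, the even-word subgroup of Δ. -/
def Δplus : Subgroup Δ := Subgroup.closure {R 1 * R 2, R 2 * R 0, R 0 * R 1}

/-- The preimage H φ⁻¹, regarded as a subgroup of Δ. -/
def preim (φ : Δ0 →* Δ) (H : Subgroup Δ) : Subgroup Δ :=
  (H.comap φ).map Δ0.subtype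

/-- The kernel of φ, regarded as a subgroup of Δ. -/
def kerS (φ : Δ0 →* Δ) : Subgroup Δ := φ.ker.map Δ0.subtype

/-- The conjugate K^g = g⁻¹ K g. -/
def conjS (K : Subgroup Δ) (g : Δ) : Subgroup Δ :=
  K.map (MulAut.conj g⁻¹).toMonoidHom

/-- The four involutions R₁, R₂, R₁^{R₀}, R₂^{R₀} generating Δ^{0̂}. -/
def gens : Set Δ := {R 1, R 2, (R 0)⁻¹ * R 1 * R 0, (R 0)⁻¹ * R 2 * R 0}


-- basic involution facts
lemma R_mul_self (i : Fin 3) : R i * R i = 1 := by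
  have h : ((FreeGroup.of i) ^ 2 : FreeGroup (Fin 3)) ∈ Subgroup.normalClosure rels :=
    Subgroup.subset_normalClosure ⟨i, rfl⟩
  have : (PresentedGroup.mk rels) ((FreeGroup.of i) ^ 2) = 1 :=
    (QuotientGroup.eq_one_iff _).2 h
  simpa [R, PresentedGroup.of, map_pow, sq] using this

lemma R_inv (i : Fin 3) : (R i)⁻¹ = R i :=
  inv_eq_of_mul_eq_one_right (R_mul_self i)

-- sign homomorphism
def sgn : Δ →* ℤˣ :=
  PresentedGroup.toGroup (f := fun _ : Fin 3 => (-1 : ℤˣ))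
    (by rintro r ⟨i, rfl⟩; simp [Int.units_sq])

@[simp] lemma sgn_R (i : Fin 3) : sgn (R i) = -1 := PresentedGroup.toGroup.of _

lemma units_cases (u : ℤˣ) : u = 1 ∨ u = -1 := Int.units_eq_one_or u

-- homomorphisms out of ℤˣ
def homU {M : Type*} [Group M] (m : M) (hm : m * m = 1) : ℤˣ →* M where
  toFun x := if x = 1 then 1 else m
  map_one' := if_pos rfl
  map_mul' x y := by
    rcases Int.units_eq_one_or x with rfl | rfl <;>
      rcases Int.units_eq_one_or y with rfl | rfl <;>
      simp [hm]

@[simp] lemma homU_one {M : Type*} [Group M] (m : M) (hm : m * m = 1) : homU m hm 1 = 1 := rfl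
@[simp] lemma homU_neg_one {M : Type*} [Group M] (m : M) (hm : m * m = 1) :
    homU m hm (-1) = m := by
  show (if (-1 : ℤˣ) = 1 then 1 else m) = m
  rw [if_neg (by decide)]

-- the inversion automorphism of the free group on two generators
abbrev F2 := FreeGroup (Fin 2)

def Einv : F2 →* F2 := FreeGroup.lift (fun i => (FreeGroup.of i)⁻¹)

@[simp] lemma Einv_of (i : Fin 2) : Einv (FreeGroup.of i) = (FreeGroup.of i)⁻¹ :=
  FreeGroup.lift_apply_of

lemma Einv_Einv (x : F2) : Einv (Einv x) = x := by
  have : Einv.comp Einv = MonoidHom.id F2 :=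
    FreeGroup.ext_hom _ _ (fun a => by simp)
  simpa using DFunLike.congr_fun this x

def eAut : MulAut F2 :=
  { toFun := Einv, invFun := Einv, left_inv := Einv_Einv, right_inv := Einv_Einv,
    map_mul' := Einv.map_mul }

lemma eAut_sq : eAut * eAut = 1 := by
  ext x
  exact Einv_Einv x

def act : ℤˣ →* MulAut F2 := homU eAut eAut_sq

-- the model G = F2 ⋊ C2
abbrev Gm := SemidirectProduct F2 ℤˣ act

open SemidirectProduct in
def wv : Fin 3 → F2 := ![1, FreeGroup.of 0, FreeGroup.of 1]

open SemidirectProduct in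
lemma iota_rel (i : Fin 3) :
    ((inl (wv i) * inr (-1) : Gm)) * (inl (wv i) * inr (-1)) = 1 := by
  have hconj : (inr (-1) : Gm) * inl (wv i) * inr (-1) = inl (act (-1) (wv i)) := by
    rw [inl_aut]
    norm_num
  have hact : act (-1) (wv i) = (wv i)⁻¹ := by
    show (homU eAut eAut_sq) (-1) (wv i) = (wv i)⁻¹
    rw [homU_neg_one]
    show Einv (wv i) = (wv i)⁻¹
    fin_cases i <;> simp [wv]
  calc (inl (wv i) * inr (-1) : Gm) * (inl (wv i) * inr (-1))
      = inl (wv i) * (inr (-1) * inl (wv i) * inr (-1)) := by group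
    _ = inl (wv i) * inl (act (-1) (wv i)) := by rw [hconj]
    _ = 1 := by rw [hact, ← map_mul, mul_inv_cancel, map_one]

open SemidirectProduct in
def ι : Δ →* Gm :=
  PresentedGroup.toGroup (f := fun i => inl (wv i) * inr (-1))
    (by rintro r ⟨i, rfl⟩
        rw [map_pow, sq, FreeGroup.lift_apply_of]
        exact iota_rel i)

open SemidirectProduct in
@[simp] lemma ι_R (i : Fin 3) : ι (R i) = inl (wv i) * inr (-1) := PresentedGroup.toGroup.of _


@[simp] lemma R_mul_cancel (i : Fin 3) (x : Δ) : R i * (R i * x) = x := by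
  rw [← mul_assoc, R_mul_self, one_mul]

-- the inverse map κ : Gm →* Δ
def Kmap : F2 →* Δ := FreeGroup.lift ![R 1 * R 0, R 2 * R 0]

@[simp] lemma Kmap_of (j : Fin 2) : Kmap (FreeGroup.of j) = ![R 1 * R 0, R 2 * R 0] j :=
  FreeGroup.lift_apply_of

open SemidirectProduct in
lemma kappa_compat :
    ∀ g : ℤˣ, Kmap.comp (act g).toMonoidHom =
      (MulAut.conj ((homU (R 0) (R_mul_self 0)) g)).toMonoidHom.comp Kmap := by
  intro g
  rcases Int.units_eq_one_or g with rfl | rfl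
  · apply FreeGroup.ext_hom
    intro a
    simp
  · apply FreeGroup.ext_hom
    intro a
    show Kmap (eAut (FreeGroup.of a)) = MulAut.conj (R 0) (Kmap (FreeGroup.of a))
    rw [show eAut (FreeGroup.of a) = (FreeGroup.of a)⁻¹ from Einv_of a, map_inv,
      MulAut.conj_apply]
    fin_cases a <;>
      simp [mul_inv_rev, R_inv, mul_assoc, R_mul_self, R_mul_cancel]

def κ : Gm →* Δ :=
  SemidirectProduct.lift Kmap (homU (R 0) (R_mul_self 0)) kappa_compat

lemma κι : ∀ x : Δ, κ (ι x) = x := by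
  have : κ.comp ι = MonoidHom.id Δ := by
    apply PresentedGroup.ext
    intro i
    show κ (ι (R i)) = R i
    simp only [κ, SemidirectProduct.lift_inl, SemidirectProduct.lift_inr, homU_neg_one]
    fin_cases i <;> simp [wv, mul_assoc, R_mul_self, R_mul_cancel]
  exact fun x => DFunLike.congr_fun this x

lemma ι_inj : Function.Injective ι :=
  Function.LeftInverse.injective κι

lemma rightHom_ι (x : Δ) : SemidirectProduct.rightHom (ι x) = sgn x := by
  have : (SemidirectProduct.rightHom.comp ι : Δ →* ℤˣ) = sgn := by
    apply PresentedGroup.ext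
    intro i
    show SemidirectProduct.rightHom (ι (R i)) = sgn (R i)
    rw [ι_R, map_mul, SemidirectProduct.rightHom_inl, SemidirectProduct.rightHom_inr, sgn_R,
      one_mul]
  exact DFunLike.congr_fun this x
lemma FreeGroup.eq_one_of_mul_self {α : Type*} [DecidableEq α] (w : FreeGroup α)
    (h : w * w = 1) : w = 1 := by
  by_contra hne
  have hinv : w⁻¹ = w := inv_eq_of_mul_eq_one_right h
  have hIL : FreeGroup.invRev w.toWord = w.toWord := by
    rw [← FreeGroup.toWord_inv, hinv]
  obtain ⟨L, hred, hIL'⟩ : ∃ L : List (α × Bool), FreeGroup.reduce L = L ∧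
      FreeGroup.invRev L = L ∧ L ≠ [] :=
    ⟨w.toWord, w.reduce_toWord, hIL, fun hnil => hne (FreeGroup.toWord_eq_nil_iff.mp hnil)⟩
  obtain ⟨hIL, hn0⟩ := hIL'
  set n := L.length with hn
  have hpos : 0 < n := List.length_pos_iff.mpr hn0
  have hget : ∀ k, k < n → L[k]? = (L[n - 1 - k]?).map (fun g : α × Bool => (g.1, !g.2)) := by
    intro k hk
    conv_lhs => rw [← hIL]
    unfold FreeGroup.invRev
    rw [List.getElem?_reverse (by simpa [FreeGroup.invRev, hn] using hk), List.getElem?_map]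
    simp [hn]
  rcases Nat.even_or_odd n with ⟨m, hm⟩ | ⟨m, hm⟩
  · -- n = 2m, m ≥ 1; adjacent cancelling pair at positions m-1, m
    have hmpos : 0 < m := by omega
    have h1 : m - 1 < n := by omega
    have h2 : m < n := by omega
    have key' := hget m h2
    rw [show n - 1 - m = m - 1 by omega, List.getElem?_eq_getElem h1,
      List.getElem?_eq_getElem h2] at key'
    have key : L[m]'h2 = ((L[m-1]'h1).1, !(L[m-1]'h1).2) := by
      simpa using key'
    have hdecomp : L = L.take (m-1) ++ (L[m-1]'h1) :: (L[m]'h2) :: L.drop (m+1) := by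
      conv_lhs => rw [← List.take_append_drop (m-1) L]
      congr 1
      rw [List.drop_eq_getElem_cons h1]
      congr 1
      rw [show m - 1 + 1 = m by omega, List.drop_eq_getElem_cons h2]
    rw [key] at hdecomp
    exact FreeGroup.reduce.not (L₂ := L.take (m-1)) (L₃ := L.drop (m+1))
      (x := (L[m-1]'h1).1) (b := (L[m-1]'h1).2)
      (by rw [hred]; simpa using hdecomp)
  · -- n odd: middle letter equals its own inverse
    have h2 : m < n := by omega
    have key' := hget m h2
    rw [show n - 1 - m = m by omega, List.getElem?_eq_getElem h2] at key'
    have : (L[m]'h2).2 = !(L[m]'h2).2 := by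
      have := Option.some.inj key'
      exact congrArg Prod.snd this
    simp at this

lemma delta_no_involution_in_ker (t : Δ) (h2 : t * t = 1) (hs : sgn t = 1) : t = 1 := by
  apply ι_inj
  rw [map_one]
  have hr : (ι t).right = 1 := by
    have := rightHom_ι t
    rw [hs] at this
    exact this
  have hl : (ι t).left = 1 := by
    have hmul : ι t * ι t = 1 := by rw [← map_mul, h2, map_one]
    have : (ι t * ι t).left = (1 : Gm).left := by rw [hmul]
    rw [SemidirectProduct.mul_left, hr, map_one, MulAut.one_apply] at this
    exact FreeGroup.eq_one_of_mul_self _ this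
  ext
  · rw [hl]; rfl
  · rw [hr]; rfl

-- membership of pairs in Δplus
lemma pair_swap_mem {i j : Fin 3} (h : R i * R j ∈ Δplus) : R j * R i ∈ Δplus := by
  have := inv_mem h
  rwa [mul_inv_rev, R_inv, R_inv] at this

lemma pair_mem (i j : Fin 3) : R i * R j ∈ Δplus := by
  have h12 : R 1 * R 2 ∈ Δplus := Subgroup.subset_closure (by left; rfl)
  have h20 : R 2 * R 0 ∈ Δplus := Subgroup.subset_closure (by right; left; rfl)
  have h01 : R 0 * R 1 ∈ Δplus := Subgroup.subset_closure (by right; right; rfl)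
  fin_cases i <;> fin_cases j <;>
    first
      | (rw [R_mul_self]; exact one_mem _)
      | exact h12 | exact h20 | exact h01
      | exact pair_swap_mem h12 | exact pair_swap_mem h20 | exact pair_swap_mem h01

-- a closure is normal as soon as conjugation by the generators R i preserves it
lemma closure_normal_of_conj (S : Set Δ)
    (h : ∀ (i : Fin 3), ∀ s ∈ S, R i * s * R i ∈ Subgroup.closure S) :
    (Subgroup.closure S).Normal := by
  have key : ∀ (i : Fin 3), ∀ n ∈ Subgroup.closure S, R i * n * R i ∈ Subgroup.closure S := by
    intro i n hn
    induction hn using Subgroup.closure_induction with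
    | mem x hx => exact h i x hx
    | one => rw [mul_one, R_mul_self]; exact one_mem _
    | mul x y hx hy ihx ihy =>
        have : R i * (x * y) * R i = (R i * x * R i) * (R i * y * R i) := by
          simp [mul_assoc]
        rw [this]; exact mul_mem ihx ihy
    | inv x hx ihx =>
        have : R i * x⁻¹ * R i = (R i * x * R i)⁻¹ := by
          simp [mul_inv_rev, R_inv, mul_assoc]
        rw [this]; exact inv_mem ihx
  constructor
  intro n hn g
  have htop : g ∈ Subgroup.closure (Set.range (PresentedGroup.of : Fin 3 → Δ)) := by
    rw [PresentedGroup.closure_range_of]; trivial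
  have main : ∀ m ∈ Subgroup.closure S, g * m * g⁻¹ ∈ Subgroup.closure S ∧
      g⁻¹ * m * g ∈ Subgroup.closure S := by
    induction htop using Subgroup.closure_induction with
    | mem x hx =>
        obtain ⟨i, rfl⟩ := hx
        intro m hm
        constructor
        · have : (R i : Δ) * m * (R i)⁻¹ = R i * m * R i := by rw [R_inv]
          rw [show (PresentedGroup.of i : Δ) = R i from rfl, this]
          exact key i m hm
        · have : (R i : Δ)⁻¹ * m * R i = R i * m * R i := by rw [R_inv]
          rw [show (PresentedGroup.of i : Δ) = R i from rfl, this]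
          exact key i m hm
    | one => intro m hm; constructor <;> simpa using hm
    | mul x y hx hy ihx ihy =>
        intro m hm
        constructor
        · have : x * y * m * (x * y)⁻¹ = x * (y * m * y⁻¹) * x⁻¹ := by group
          rw [this]; exact (ihx _ ((ihy m hm).1)).1
        · have : (x * y)⁻¹ * m * (x * y) = y⁻¹ * (x⁻¹ * m * x) * y := by group
          rw [this]; exact (ihy _ ((ihx m hm).2)).2
    | inv x hx ihx =>
        intro m hm
        constructor
        · have : x⁻¹ * m * x⁻¹⁻¹ = x⁻¹ * m * x := by group
          rw [this]; exact (ihx m hm).2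
        · have : x⁻¹⁻¹ * m * x⁻¹ = x * m * x⁻¹ := by group
          rw [this]; exact (ihx m hm).1
  exact (main n hn).1

lemma Δplus_normal : Δplus.Normal := by
  apply closure_normal_of_conj
  intro i s hs
  have : ∀ j k : Fin 3, R i * (R j * R k) * R i ∈ Δplus := by
    intro j k
    have : R i * (R j * R k) * R i = (R i * R j) * (R k * R i) := by group
    rw [this]
    exact mul_mem (pair_mem i j) (pair_mem k i)
  rcases hs with rfl | rfl | rfl
  · exact this 1 2
  · exact this 2 0
  · exact this 0 1

-- characterization of Δplus by the sign character
lemma Δplus_le_ker : ∀ x ∈ Δplus, sgn x = 1 := by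
  intro x hx
  have : Δplus ≤ sgn.ker := by
    rw [Δplus, Subgroup.closure_le]
    rintro y (rfl | rfl | rfl) <;> simp [MonoidHom.mem_ker]
  exact this hx

lemma coset_lemma (x : Δ) :
    (sgn x = 1 ∧ x ∈ Δplus) ∨ (sgn x = -1 ∧ x * R 0 ∈ Δplus) := by
  haveI := Δplus_normal
  have htop : x ∈ Subgroup.closure (Set.range (PresentedGroup.of : Fin 3 → Δ)) := by
    rw [PresentedGroup.closure_range_of]; trivial
  induction htop using Subgroup.closure_induction with
  | mem y hy =>
      obtain ⟨i, rfl⟩ := hy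
      right
      exact ⟨sgn_R i, pair_mem i 0⟩
  | one => left; simp [one_mem]
  | mul y z hy hz ihy ihz =>
      rcases ihy with ⟨hs1, hm1⟩ | ⟨hs1, hm1⟩ <;> rcases ihz with ⟨hs2, hm2⟩ | ⟨hs2, hm2⟩
      · left; exact ⟨by rw [map_mul, hs1, hs2, one_mul], mul_mem hm1 hm2⟩
      · right
        refine ⟨by rw [map_mul, hs1, hs2, one_mul], ?_⟩
        have : y * z * R 0 = y * (z * R 0) := by group
        rw [this]; exact mul_mem hm1 hm2
      · right
        refine ⟨by rw [map_mul, hs1, hs2, mul_one], ?_⟩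
        have hconj : (R 0)⁻¹ * z * ((R 0)⁻¹)⁻¹ ∈ Δplus := Δplus_normal.conj_mem z hm2 (R 0)⁻¹
        have : y * z * R 0 = (y * R 0) * ((R 0)⁻¹ * z * ((R 0)⁻¹)⁻¹) := by group
        rw [this]; exact mul_mem hm1 hconj
      · left
        refine ⟨by rw [map_mul, hs1, hs2]; decide, ?_⟩
        have hconj : (R 0)⁻¹ * (z * R 0) * ((R 0)⁻¹)⁻¹ ∈ Δplus :=
          Δplus_normal.conj_mem _ hm2 (R 0)⁻¹
        have : y * z = (y * R 0) * ((R 0)⁻¹ * (z * R 0) * ((R 0)⁻¹)⁻¹) * (R 0 * R 0)⁻¹ := by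
          group
        rw [this, R_mul_self, inv_one, mul_one]
        exact mul_mem hm1 hconj
  | inv y hy ihy =>
      rcases ihy with ⟨hs1, hm1⟩ | ⟨hs1, hm1⟩
      · left; exact ⟨by rw [map_inv, hs1, inv_one], inv_mem hm1⟩
      · right
        refine ⟨by rw [map_inv, hs1]; decide, ?_⟩
        have hconj : R 0 * (y * R 0)⁻¹ * (R 0)⁻¹ ∈ Δplus :=
          Δplus_normal.conj_mem _ (inv_mem hm1) (R 0)
        have : y⁻¹ * R 0 = (R 0 * (y * R 0)⁻¹ * (R 0)⁻¹) * (R 0 * R 0) := by group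
        rw [this, R_mul_self, mul_one]
        exact hconj

lemma mem_Δplus_iff (x : Δ) : x ∈ Δplus ↔ sgn x = 1 := by
  refine ⟨Δplus_le_ker x, fun hx => ?_⟩
  rcases coset_lemma x with ⟨_, hm⟩ | ⟨hs, _⟩
  · exact hm
  · rw [hx] at hs; exact absurd hs (by decide)

-- facts about the four generators
lemma gens_sq : ∀ s ∈ gens, s * s = 1 := by
  rintro s (rfl | rfl | rfl | rfl)
  · exact R_mul_self 1
  · exact R_mul_self 2
  · have : (R 0)⁻¹ * R 1 * R 0 * ((R 0)⁻¹ * R 1 * R 0) = (R 0)⁻¹ * (R 1 * R 1) * R 0 := by group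
    rw [this, R_mul_self, mul_one, inv_mul_cancel]
  · have : (R 0)⁻¹ * R 2 * R 0 * ((R 0)⁻¹ * R 2 * R 0) = (R 0)⁻¹ * (R 2 * R 2) * R 0 := by group
    rw [this, R_mul_self, mul_one, inv_mul_cancel]

lemma gens_sgn : ∀ s ∈ gens, sgn s = -1 := by
  rintro s (rfl | rfl | rfl | rfl) <;> simp <;> decide

lemma gens_subset_Δ0 : gens ⊆ (Δ0 : Set Δ) := by
  haveI : Δ0.Normal := Subgroup.normalClosure_normal
  have h1 : R 1 ∈ Δ0 := Subgroup.subset_normalClosure (by left; rfl)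
  have h2 : R 2 ∈ Δ0 := Subgroup.subset_normalClosure (by right; rfl)
  rintro s (rfl | rfl | rfl | rfl)
  · exact h1
  · exact h2
  · have := this.conj_mem _ h1 (R 0)⁻¹
    simpa using this
  · have := this.conj_mem _ h2 (R 0)⁻¹
    simpa using this

lemma Δ0_eq_closure_gens : Δ0 = Subgroup.closure gens := by
  have h1 : R 1 ∈ Subgroup.closure gens := Subgroup.subset_closure (by left; rfl)
  have h2 : R 2 ∈ Subgroup.closure gens := Subgroup.subset_closure (by right; left; rfl)
  have h3 : (R 0)⁻¹ * R 1 * R 0 ∈ Subgroup.closure gens :=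
    Subgroup.subset_closure (by right; right; left; rfl)
  have h4 : (R 0)⁻¹ * R 2 * R 0 ∈ Subgroup.closure gens :=
    Subgroup.subset_closure (by right; right; right; rfl)
  haveI hnorm : (Subgroup.closure gens).Normal := by
    apply closure_normal_of_conj
    rintro i s (rfl | rfl | rfl | rfl) <;> fin_cases i
    · -- R 0 * R 1 * R 0
      show R 0 * R 1 * R 0 ∈ Subgroup.closure gens
      have : R 0 * R 1 * R 0 = (R 0)⁻¹ * R 1 * R 0 := by rw [R_inv]
      rw [this]; exact h3
    · show R 1 * R 1 * R 1 ∈ Subgroup.closure gens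
      have : R 1 * R 1 * R 1 = R 1 := by rw [R_mul_self, one_mul]
      rw [this]; exact h1
    · show R 2 * R 1 * R 2 ∈ Subgroup.closure gens
      have : R 2 * R 1 * R 2 = R 2 * (R 1 * R 2) := by group
      rw [this]; exact mul_mem h2 (mul_mem h1 h2)
    · show R 0 * R 2 * R 0 ∈ Subgroup.closure gens
      have : R 0 * R 2 * R 0 = (R 0)⁻¹ * R 2 * R 0 := by rw [R_inv]
      rw [this]; exact h4
    · show R 1 * R 2 * R 1 ∈ Subgroup.closure gens
      have : R 1 * R 2 * R 1 = R 1 * (R 2 * R 1) := by group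
      rw [this]; exact mul_mem h1 (mul_mem h2 h1)
    · show R 2 * R 2 * R 2 ∈ Subgroup.closure gens
      have : R 2 * R 2 * R 2 = R 2 := by rw [R_mul_self, one_mul]
      rw [this]; exact h2
    · show R 0 * ((R 0)⁻¹ * R 1 * R 0) * R 0 ∈ Subgroup.closure gens
      have : R 0 * ((R 0)⁻¹ * R 1 * R 0) * R 0 = R 1 * (R 0 * R 0) := by group
      rw [this, R_mul_self, mul_one]; exact h1
    · exact mul_mem (mul_mem h1 h3) h1
    · exact mul_mem (mul_mem h2 h3) h2
    · show R 0 * ((R 0)⁻¹ * R 2 * R 0) * R 0 ∈ Subgroup.closure gens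
      have : R 0 * ((R 0)⁻¹ * R 2 * R 0) * R 0 = R 2 * (R 0 * R 0) := by group
      rw [this, R_mul_self, mul_one]; exact h2
    · exact mul_mem (mul_mem h1 h4) h1
    · exact mul_mem (mul_mem h2 h4) h2
  apply le_antisymm
  · apply Subgroup.normalClosure_le_normal
    rintro x (rfl | rfl)
    · exact h1
    · exact h2
  · rw [Subgroup.closure_le]
    exact gens_subset_Δ0

lemma mem_preim {φ : Δ0 →* Δ} {H : Subgroup Δ} {x : Δ} :
    x ∈ preim φ H ↔ ∃ hx : x ∈ Δ0, φ ⟨x, hx⟩ ∈ H := by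
  constructor
  · rintro ⟨⟨y, hy⟩, hmem, rfl⟩
    exact ⟨hy, hmem⟩
  · rintro ⟨hx, hmem⟩
    exact ⟨⟨x, hx⟩, hmem, rfl⟩


theorem stmt13 (φ : Δ0 →* Δ) (hφ : Function.Surjective φ) :
    [(∀ s ∈ gens, s ∉ preim φ Δplus),
     preim φ Δplus = Δplus ⊓ Δ0,
     kerS φ ≤ Δplus,
     (∀ O : Subgroup Δ, O ≤ Δplus → preim φ O ≤ Δplus)].TFAE := by
  tfae_have 1 → 2 := by
    intro h1
    have key : ∀ (x : Δ) (hx : x ∈ Δ0), sgn (φ ⟨x, hx⟩) = sgn x := by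
      have main : ∀ x ∈ Subgroup.closure gens,
          ∀ hx : x ∈ Δ0, sgn (φ ⟨x, hx⟩) = sgn x := by
        intro x hxc
        induction hxc using Subgroup.closure_induction with
        | mem s hs =>
            intro hmem
            have hnot : φ ⟨s, hmem⟩ ∉ Δplus := fun hin => h1 s hs (mem_preim.mpr ⟨hmem, hin⟩)
            have : sgn (φ ⟨s, hmem⟩) ≠ 1 := fun h => hnot ((mem_Δplus_iff _).mpr h)
            rcases Int.units_eq_one_or (sgn (φ ⟨s, hmem⟩)) with h | h
            · exact absurd h this
            · rw [h, gens_sgn s hs]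
        | one =>
            intro hmem
            have : (⟨(1 : Δ), hmem⟩ : Δ0) = 1 := rfl
            rw [this, map_one, map_one]
        | mul a b ha hb iha ihb =>
            intro hmem
            have ha0 : a ∈ Δ0 := Δ0_eq_closure_gens ▸ ha
            have hb0 : b ∈ Δ0 := Δ0_eq_closure_gens ▸ hb
            have : (⟨a * b, hmem⟩ : Δ0) = ⟨a, ha0⟩ * ⟨b, hb0⟩ := rfl
            rw [this, map_mul, map_mul, iha ha0, ihb hb0, map_mul]
        | inv a ha iha =>
            intro hmem
            have ha0 : a ∈ Δ0 := Δ0_eq_closure_gens ▸ ha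
            have : (⟨a⁻¹, hmem⟩ : Δ0) = (⟨a, ha0⟩)⁻¹ := rfl
            rw [this, map_inv, map_inv, iha ha0, map_inv]
      intro x hx
      exact main x (Δ0_eq_closure_gens ▸ hx) hx
    ext x
    rw [mem_preim, Subgroup.mem_inf]
    constructor
    · rintro ⟨hx, hmem⟩
      refine ⟨(mem_Δplus_iff x).mpr ?_, hx⟩
      rw [← key x hx]
      exact (mem_Δplus_iff _).mp hmem
    · rintro ⟨hplus, hx⟩
      refine ⟨hx, (mem_Δplus_iff _).mpr ?_⟩
      rw [key x hx]
      exact (mem_Δplus_iff x).mp hplus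
  tfae_have 2 → 3 := by
    intro h2
    rintro x ⟨y, hy, rfl⟩
    have : (y : Δ) ∈ preim φ Δplus :=
      mem_preim.mpr ⟨y.2, by rw [show (⟨(y : Δ), y.2⟩ : Δ0) = y from rfl,
        MonoidHom.mem_ker.mp hy]; exact one_mem _⟩
    rw [h2] at this
    exact this.1
  tfae_have 2 → 4 := by
    intro h2 O hO
    have : preim φ O ≤ preim φ Δplus :=
      Subgroup.map_mono (Subgroup.comap_mono hO)
    rw [h2] at this
    exact this.trans inf_le_left
  tfae_have 4 → 3 := by
    intro h4
    have : kerS φ = preim φ ⊥ := by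
      rw [preim, MonoidHom.comap_bot, kerS]
    rw [this]
    exact h4 ⊥ bot_le
  tfae_have 3 → 1 := by
    intro h3 s hs hmem
    obtain ⟨hs0, hin⟩ := mem_preim.mp hmem
    set t := φ ⟨s, hs0⟩ with ht
    have hsgn : sgn t = 1 := (mem_Δplus_iff _).mp hin
    have ht2 : t * t = 1 := by
      rw [ht, ← map_mul, show (⟨s, hs0⟩ : Δ0) * ⟨s, hs0⟩ = 1 from
        Subtype.ext (gens_sq s hs), map_one]
    have ht1 : t = 1 := delta_no_involution_in_ker t ht2 hsgn
    rw [ht] at ht1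
    have hker : (⟨s, hs0⟩ : Δ0) ∈ φ.ker := MonoidHom.mem_ker.mpr ht1
    have : s ∈ kerS φ := ⟨⟨s, hs0⟩, hker, rfl⟩
    have : sgn s = 1 := (mem_Δplus_iff s).mp (h3 this)
    rw [gens_sgn s hs] at this
    exact absurd this (by decide)
  tfae_finish
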